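/- arXiv:1405.4892 — 2 statements merged into one kernel-verified Lean document; each statement's English description precedes it below -/
import Mathlib

section
/- Let w = (uav')^k u, where u, v' ∈ Σ*, a ∈ Σ, k ≥ 1 and uav' is a Lyndon word. If a' ∈ Σ and a < a', then wa' is a Lyndon word. -/
variable {α : Type*}

/-- The rotation `rot(w,i) = w[i..|w|-1] w[0..i-1]`. -/
def rot (w : List α) (i : ℕ) : List α := w.drop i ++ w.take i

/-- A Lyndon word: a nonempty word strictly smaller than all of its proper rotations. -/
def IsLyndon [LinearOrder α] (w : List α) : Prop :=
  w ≠ [] ∧ ∀ i, 0 < i → i < w.length → w < rot w i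

/-- `IsCFL w f` : `f` is the Chen–Fox–Lyndon factorization of `w`, i.e. a
nonincreasing sequence of Lyndon words whose concatenation is `w`. -/
def IsCFL [LinearOrder α] (w : List α) (f : List (List α)) : Prop :=
  f.flatten = w ∧ (∀ x ∈ f, IsLyndon x) ∧ f.Chain' (· ≥ ·)

/-- `u^k` : the `k`-fold concatenation of the word `u`. -/
def listPow (u : List α) (k : ℕ) : List α := (List.replicate k u).flatten

/-- `P`: the set of nonempty prefixes of Lyndon words. -/
def InP [LinearOrder α] (w : List α) : Prop :=
  w ≠ [] ∧ ∃ u : List α, IsLyndon (w ++ u)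

/-- `P' = P ∪ { c^k : k ≥ 2 }` where `c` is the maximum symbol of the alphabet. -/
def InP' [LinearOrder α] (w : List α) : Prop :=
  InP w ∨ ∃ (c : α) (k : ℕ), 2 ≤ k ∧ (∀ a : α, a ≤ c) ∧ w = List.replicate k c

/-- A border of `w`: a proper prefix of `w` that is also a suffix of `w`. -/
def IsBorder (b w : List α) : Prop := b <+: w ∧ b <:+ w ∧ b.length < w.length

/-- The length of the longest common prefix of two words. -/
def lcpLen [DecidableEq α] : List α → List α → ℕ
  | a :: u, b :: v => if a = b then lcpLen u v + 1 else 0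
  | _, _ => 0

/-!
Write `t = u a v'`. Every proper suffix of `u a'` has the form `s a'` where `s a v'` is a proper
suffix of `t`, hence larger than `t`; comparing the first `|s| + 1` letters gives `u a' < s a'`,
so `u a'` is Lyndon, and clearly `t < u a'`. If `x < y` are Lyndon words then `x y` is Lyndon,
and `t` is a proper prefix of `t^j u a'`, so induction on `j` shows that `t^j u a'` is Lyndon.
-/

namespace List

variable [LinearOrder α] {x y z z' : List α}

theorem append_lt_append_of_lt_of_not_prefix (h : x < y) (hp : ¬x <+: y) :
    x ++ z < y ++ z' := by
  induction h with
  | nil => exact absurd nil_prefix hp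
  | rel hab => exact Lex.rel hab
  | cons _ ih => exact Lex.cons (ih fun hp' => hp (cons_prefix_cons.2 ⟨rfl, hp'⟩))

theorem append_lt_append_of_lt_of_length_le (h : x < y) (hl : y.length ≤ x.length) :
    x ++ z < y ++ z' :=
  append_lt_append_of_lt_of_not_prefix h fun hp => (lt_irrefl x) (hp.eq_of_length_le hl ▸ h)

theorem lt_or_eq_and_lt_of_append_lt_append (hl : x.length = y.length)
    (h : x ++ z < y ++ z') : x < y ∨ x = y ∧ z < z' := by
  induction x generalizing y with
  | nil => cases y with
    | nil => exact Or.inr ⟨rfl, h⟩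
    | cons => simp at hl
  | cons a x ih => cases y with
    | nil => simp at hl
    | cons b y =>
      rcases cons_lt_cons_iff.1 h with hab | ⟨rfl, hxz⟩
      · exact Or.inl (Lex.rel hab)
      · rcases ih (by simpa using hl) hxz with hxy | ⟨rfl, hz⟩
        · exact Or.inl (Lex.cons hxy)
        · exact Or.inr ⟨rfl, hz⟩

end List

open List

section Lyndon

variable [LinearOrder α] {x y : List α}

theorem IsLyndon.lt_drop (h : IsLyndon x) {r : ℕ} (hr0 : 0 < r) (hr : r < x.length) :
    x < x.drop r := by
  have hrot : x < x.drop r ++ x.take r := h.2 r hr0 hr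
  by_contra! hle
  have hlt : x.drop r < x := lt_of_le_of_ne hle fun e => by
    have := congrArg length e
    simp only [length_drop] at this
    omega
  by_cases hp : x.drop r <+: x
  · obtain ⟨z, hz⟩ := hp
    have hzlen : z.length = r := by
      have := congrArg length hz
      simp only [length_append, length_drop] at this
      omega
    have hz_lt : z < x.take r := by
      nth_rewrite 1 [← hz] at hrot
      exact ((lt_or_eq_and_lt_of_append_lt_append rfl hrot).resolve_left (lt_irrefl _)).2
    -- as `x.drop r` is a border of `x`, the rotation by `|x| - r` is `z ++ x.drop r`
    have hrot' := h.2 (x.length - r) (by omega) (by omega)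
    have hlen : (x.drop r).length = x.length - r := length_drop
    have hdrop : (x.drop r ++ z).drop (x.length - r) = z := drop_left' hlen
    have htake : (x.drop r ++ z).take (x.length - r) = x.drop r := take_left' hlen
    rw [hz] at hdrop htake
    rw [rot, hdrop, htake] at hrot'
    refine lt_asymm hrot' ?_
    simpa using append_lt_append_of_lt_of_length_le (z := x.drop r) (z' := x.drop r) hz_lt
      (by simp; omega)
  · exact lt_asymm hrot
      (by simpa using append_lt_append_of_lt_of_not_prefix (z := x.take r) (z' := []) hlt hp)

theorem isLyndon_iff_lt_drop :
    IsLyndon x ↔ x ≠ [] ∧ ∀ i, 0 < i → i < x.length → x < x.drop i := by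
  refine ⟨fun h => ⟨h.1, fun i hi0 hi => h.lt_drop hi0 hi⟩,
    fun ⟨hne, h⟩ => ⟨hne, fun i hi0 hi => ?_⟩⟩
  simpa [rot] using
    append_lt_append_of_lt_of_length_le (z := []) (z' := x.take i) (h i hi0 hi) (by simp)

theorem IsLyndon.append_lt (hy : IsLyndon y) (hx : x ≠ []) (hxy : x < y) : x ++ y < y := by
  by_cases hp : x <+: y
  · obtain ⟨y', rfl⟩ := hp
    have hy' : y' ≠ [] := by
      rintro rfl
      simp at hxy
    have : x ++ y' < y' := by
      simpa using hy.lt_drop (r := x.length) (length_pos_iff.2 hx)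
        (by simpa using length_pos_iff.2 hy')
    exact append_left_lt this
  · simpa using append_lt_append_of_lt_of_not_prefix (z := y) (z' := []) hxy hp

theorem IsLyndon.append (hx : IsLyndon x) (hy : IsLyndon y) (hxy : x < y) :
    IsLyndon (x ++ y) := by
  refine isLyndon_iff_lt_drop.2 ⟨by simp [hx.1], fun i hi0 hi => ?_⟩
  rw [drop_append]
  rcases lt_trichotomy i x.length with hix | rfl | hxi
  · rw [Nat.sub_eq_zero_of_le hix.le, drop_zero]
    exact append_lt_append_of_lt_of_length_le (hx.lt_drop hi0 hix) (by simp)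
  · simpa using hy.append_lt hx.1 hxy
  · rw [drop_eq_nil_of_le hxi.le, nil_append]
    exact (hy.append_lt hx.1 hxy).trans (hy.lt_drop (by omega) (by simp at hi; omega))

theorem IsLyndon.append_singleton_of_lt {u v : List α} {a b : α} (h : IsLyndon (u ++ a :: v))
    (hab : a < b) : IsLyndon (u ++ [b]) := by
  refine isLyndon_iff_lt_drop.2 ⟨by simp, fun i hi0 hi => ?_⟩
  simp only [length_append, length_singleton] at hi
  have hdrop (w : List α) : (u ++ w).drop i = u.drop i ++ w := by
    rw [drop_append, Nat.sub_eq_zero_of_le (by omega), drop_zero]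
  have hu := h.lt_drop hi0 (by simp; omega)
  rw [hdrop] at hu ⊢
  -- split `u` after `|u.drop i|` letters and compare blockwise with `hu`
  obtain ⟨u₁, c, u₂, rfl, hu₁⟩ :
      ∃ u₁ c u₂, u = u₁ ++ c :: u₂ ∧ u₁.length = (u.drop i).length := by
    have hne : u.drop (u.length - i) ≠ [] := by simp; omega
    exact ⟨u.take (u.length - i), _, _, by rw [cons_head_tail hne, take_append_drop],
      by simp⟩
  simp only [append_assoc, cons_append] at hu ⊢
  rcases lt_or_eq_and_lt_of_append_lt_append hu₁ hu with hlt | ⟨heq, hc⟩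
  · exact append_lt_append_of_lt_of_length_le hlt hu₁.ge
  · rw [← heq]
    exact append_left_lt (Lex.rel ((head_le_of_lt hc).trans_lt hab))

end Lyndon

lemma listPow_succ (t : List α) (k : ℕ) : listPow t (k + 1) = t ++ listPow t k := by
  simp [listPow, replicate_succ]

theorem ext_larger_lyndon_general [LinearOrder α] (u v' : List α) (a a' : α) (k : ℕ)
    (hL : IsLyndon (u ++ a :: v')) (ha : a < a') :
    IsLyndon (listPow (u ++ a :: v') k ++ u ++ [a']) := by
  set t := u ++ a :: v'
  suffices IsLyndon (listPow t k ++ u ++ [a']) ∧ t < listPow t k ++ u ++ [a'] from this.1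
  induction k with
  | zero => simpa [listPow] using ⟨hL.append_singleton_of_lt ha, append_left_lt (Lex.rel ha)⟩
  | succ k ih =>
    have hsucc : listPow t (k + 1) ++ u ++ [a'] = t ++ (listPow t k ++ u ++ [a']) := by
      simp [listPow_succ]
    rw [hsucc]
    obtain ⟨c, y, hy⟩ := exists_cons_of_ne_nil ih.1.1
    refine ⟨hL.append ih.1 ih.2, ?_⟩
    simpa [hy] using append_left_lt (l₁ := t) (nil_lt_cons c y)

/-- For `w = (uav')^k u` with `uav'` a Lyndon word and `k ≥ 1`:
if `a < a'` then `wa'` is a Lyndon word. -/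
theorem ext_larger_lyndon [LinearOrder α] (u v' : List α) (a a' : α) (k : ℕ)
    (hk : 1 ≤ k) (hL : IsLyndon (u ++ a :: v')) (ha : a < a') :
    IsLyndon (listPow (u ++ a :: v') k ++ u ++ [a']) :=
  ext_larger_lyndon_general u v' a a' k hL ha
end

section
/- Under the run invariant, if c_j > c_s then c_k^{l_k} ⋯ c_{j-1}^{l_{j-1}} c_j^{l_j} ∈ L', and moreover its longest border is the empty word (so the invariant holds for j+1 with ℓ' = 0). -/
variable {α : Type*}

/-- The number of runs in the run-length encoding of a word: the length of the
list obtained by collapsing consecutive equal symbols. -/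
def numRuns [DecidableEq α] (w : List α) : ℕ := (w.destutter (· ≠ ·)).length

/-- An LR word: either a Lyndon word or a power `a^k` (`k ≥ 2`) of a single symbol. -/
def IsLR [LinearOrder α] (w : List α) : Prop :=
  IsLyndon w ∨ ∃ (a : α) (k : ℕ), 2 ≤ k ∧ w = List.replicate k a

/-- The word `c_k^{l_k} c_{k+1}^{l_{k+1}} ⋯ c_{j-1}^{l_{j-1}}` determined by the
runs `(c_t, l_t)` for `k ≤ t < j`. -/
def runWord (c : ℕ → α) (l : ℕ → ℕ) (k j : ℕ) : List α :=
  ((List.range (j - k)).map (fun t => List.replicate (l (k + t)) (c (k + t)))).flatten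

/-!
Write `w` for the run word `c_k^{l_k} ⋯ c_{j-1}^{l_{j-1}}` and `b` for its longest border.
As a prefix of `w`, `b` has the shape `c_k^{l_k} ⋯ c_{p-1}^{l_{p-1}} c_p^m` with `m < l_p`, so
the letter of `w` following `b` is `c_p`. Comparing the last run of `b` with the last run of `w`
(which `b` must match, being a suffix and a longest border) shows that the index `s` of the run
invariant is exactly `p`, so `c_p < c_j`; in particular `w` is not a power of the maximal letter,
hence `w ∈ P`.

For a prefix of a Lyndon word, the letter following a border can only grow with the length of
the border: the shift between two borders compares the word with one of its suffixes. Hence `c_j`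
exceeds the letter following every border of `w`, so every proper suffix of `w c_j^{l_j}` is
larger than the word itself, i.e. `w c_j^{l_j}` is a Lyndon word, and Lyndon words are
unbordered.
-/

namespace List

theorem append_lt_append_of_lt_of_not_prefix_s17 [LT α] {u v : List α} (h : u < v)
    (hu : ¬u <+: v) (s t : List α) : u ++ s < v ++ t := by
  induction h with
  | nil => exact absurd nil_prefix hu
  | cons _ ih => exact Lex.cons (ih fun hp => hu ((prefix_cons_inj _).2 hp))
  | rel h => exact Lex.rel h

variable [LinearOrder α] {u v : List α}

theorem append_lt_append_left_iff (w : List α) : w ++ u < w ++ v ↔ u < v := by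
  refine ⟨fun h => ?_, append_left_lt⟩
  rcases lt_trichotomy u v with huv | rfl | hvu
  · exact huv
  · exact absurd h (lt_irrefl _)
  · exact absurd h (append_left_lt hvu).asymm

theorem not_prefix_of_lt_of_length_le (h : u < v) (hlen : v.length ≤ u.length) : ¬u <+: v :=
  fun hp => (lt_irrefl v) (hp.eq_of_length (le_antisymm hp.length_le hlen) ▸ h)

omit [LinearOrder α] in
theorem destutter'_replicate_append {R : α → α → Prop} [DecidableRel R] {a : α}
    (ha : ¬R a a) (n : ℕ) (v : List α) :
    (replicate n a ++ v).destutter' R a = v.destutter' R a := by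
  induction n with
  | zero => rfl
  | succ n ih => rw [replicate_succ, cons_append, destutter'_cons_neg _ ha, ih]

end List

theorem isBorder_drop_of_prefix {w : List α} {i : ℕ} (hw : w ≠ []) (hi : 0 < i)
    (h : w.drop i <+: w) : IsBorder (w.drop i) w :=
  ⟨h, List.drop_suffix _ _, by simp [List.length_pos_iff.2 hw, hi]⟩

section Lyndon

variable [LinearOrder α] {w : List α}

theorem IsLyndon.eq_nil_of_isBorder {T : List α} (hw : IsLyndon w) (hT : IsBorder T w) :
    T = [] := by
  by_contra hne
  obtain ⟨⟨u, rfl⟩, ⟨v, hv⟩, hlen⟩ := hT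
  have huv : u.length = v.length := by
    have := congrArg List.length hv
    simp only [List.length_append] at this
    omega
  have hT : 0 < T.length := List.length_pos_iff.2 hne
  have hu : 0 < u.length := by simpa using hlen
  have hrot_v : rot (T ++ u) v.length = T ++ v := by
    rw [← hv, rot, List.drop_left, List.take_left]
  have hrot_T : rot (T ++ u) T.length = u ++ T := by
    rw [rot, List.drop_left, List.take_left]
  have h1 : u < v := by
    have := hw.2 v.length (huv ▸ hu) (by simpa [← huv] using hT)
    rwa [hrot_v, List.append_lt_append_left_iff] at this
  have h2 : v ++ T < u ++ T := by
    have := hw.2 T.length hT (by simpa using hu)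
    rwa [hrot_T, ← hv] at this
  exact h2.asymm (List.append_lt_append_of_lt_of_not_prefix_s17 h1
    (List.not_prefix_of_lt_of_length_le h1 huv.ge) T T)

theorem IsLyndon.lt_drop_s17 (hw : IsLyndon w) {i : ℕ} (hi : 0 < i) (hiw : i < w.length) :
    w < w.drop i := by
  have hne : w.drop i ≠ [] := by simpa using hiw
  have hpre : ¬w.drop i <+: w := fun h =>
    hne (hw.eq_nil_of_isBorder (isBorder_drop_of_prefix hw.1 hi h))
  rcases lt_trichotomy w (w.drop i) with h | h | h
  · exact h
  · exact absurd (congrArg List.length h) (by simp; omega)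
  · have := List.append_lt_append_of_lt_of_not_prefix_s17 h hpre (w.take i) []
    rw [List.append_nil] at this
    exact absurd (hw.2 i hi hiw) this.asymm

theorem isLyndon_of_lt_drop (hw : w ≠ []) (h : ∀ i, 0 < i → i < w.length → w < w.drop i) :
    IsLyndon w :=
  ⟨hw, fun i hi hiw => List.Lex.append_right _ _ (h i hi hiw)⟩

end Lyndon

section PrefixOfLyndon

variable [LinearOrder α] {w : List α}

theorem InP.drop_prefix_or_lt_drop (hw : InP w) {i : ℕ} (hi : 0 < i) :
    w.drop i <+: w ∨ w < w.drop i := by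
  obtain ⟨hne, u, hu⟩ := hw
  rcases le_or_gt w.length i with hwi | hiw
  · exact Or.inl (List.drop_eq_nil_of_le hwi ▸ List.nil_prefix)
  by_cases hpre : w.drop i <+: w
  · exact Or.inl hpre
  have hlt : w ++ u < w.drop i ++ u := by
    simpa [List.drop_append_of_le_length hiw.le] using hu.lt_drop_s17 hi (by simp; omega)
  rcases lt_trichotomy w (w.drop i) with h | h | h
  · exact Or.inr h
  · exact absurd (congrArg List.length h) (by simp; omega)
  · exact absurd hlt (List.append_lt_append_of_lt_of_not_prefix_s17 h hpre u u).asymm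

theorem InP.le_of_isBorder {T B : List α} {x y : α} (hw : InP w) (hT : IsBorder T w)
    (hB : IsBorder B w) (hTB : T.length < B.length) (hx : T ++ [x] <+: w)
    (hy : B ++ [y] <+: w) : x ≤ y := by
  obtain ⟨r, hr⟩ := hx
  obtain ⟨s, hs⟩ := hy
  have hwx : w = T ++ x :: r := by simp [← hr]
  -- `T` is also a border of `B`, so shifting `w` by `|B| - |T|` aligns `T` with the end of `B`
  have hwy : w.drop (B.length - T.length) = T ++ y :: s := by
    have hTsuf : T = B.drop (B.length - T.length) :=
      List.suffix_iff_eq_drop.1 (List.suffix_of_suffix_length_le hT.2.1 hB.2.1 hTB.le)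
    rw [← hs, List.append_assoc, List.drop_append_of_le_length (by omega), ← hTsuf]
    rfl
  rcases hw.drop_prefix_or_lt_drop (i := B.length - T.length) (by omega) with h | h
  · rw [hwy] at h
    rw [hwx, List.prefix_append_right_inj, List.prefix_cons_iff] at h
    simp only [reduceCtorEq, List.cons.injEq, false_or] at h
    obtain ⟨_, ⟨rfl, _⟩, _⟩ := h
    exact le_rfl
  · rw [hwy] at h
    rw [hwx, List.append_lt_append_left_iff] at h
    exact List.head_le_of_lt h

theorem InP.le_of_isBorder_of_longest {T B : List α} {x y : α} (hw : InP w)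
    (hB : IsBorder B w) (hmax : ∀ T, IsBorder T w → T.length ≤ B.length)
    (hy : B ++ [y] <+: w) (hT : IsBorder T w) (hx : T ++ [x] <+: w) : x ≤ y := by
  rcases (hmax T hT).lt_or_eq with hlt | heq
  · exact hw.le_of_isBorder hT hB hlt hx hy
  · have hlen : (T ++ [x]).length = (B ++ [y]).length := by simp [heq]
    have hxy := (List.prefix_of_prefix_length_le hx hy hlen.le).eq_of_length hlen
    simp only [List.append_inj_left' hxy rfl, List.append_cancel_left_eq, List.cons.injEq] at hxy
    exact hxy.1.le

theorem InP.isLyndon_append_replicate {B : List α} {y a : α} (hw : InP w)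
    (hB : IsBorder B w) (hmax : ∀ T, IsBorder T w → T.length ≤ B.length)
    (hy : B ++ [y] <+: w) (hya : y < a) {m : ℕ} (hm : 0 < m) :
    IsLyndon (w ++ List.replicate m a) := by
  refine isLyndon_of_lt_drop (by simp [hw.1]) fun i hi hiW => ?_
  obtain ⟨n, hn⟩ : ∃ n, m - (i - w.length) = n + 1 := ⟨_, (Nat.succ_pred_eq_of_pos
    (by simp only [List.length_append, List.length_replicate] at hiW; omega)).symm⟩
  have hdrop : (w ++ List.replicate m a).drop i = w.drop i ++ a :: List.replicate n a := by
    rw [List.drop_append, List.drop_replicate, hn, List.replicate_succ]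
  rw [hdrop]
  rcases hw.drop_prefix_or_lt_drop hi with ⟨r, hr⟩ | hlt
  · -- `w.drop i` is a border, and the letter following it in `w` is at most `y < a`
    obtain ⟨x, r, rfl⟩ := List.exists_cons_of_ne_nil (show r ≠ [] by
      rintro rfl
      have hlen := congrArg List.length hr
      have hpos := List.length_pos_iff.2 hw.1
      rw [List.append_nil, List.length_drop] at hlen
      omega)
    have hxy : x ≤ y := hw.le_of_isBorder_of_longest hB hmax hy
      (isBorder_drop_of_prefix hw.1 hi ⟨_, hr⟩) ⟨r, by simpa using hr⟩
    conv_lhs => rw [← hr]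
    rw [List.append_assoc, List.append_lt_append_left_iff]
    exact List.Lex.rel (hxy.trans_lt hya)
  · exact List.append_lt_append_of_lt_of_not_prefix_s17 hlt
      (List.not_prefix_of_lt_of_length_le hlt (by simp)) _ _

end PrefixOfLyndon

section TrailingRuns

variable {x y u v : List α} {a b : α} {M N : ℕ}

theorem le_of_append_replicate_eq (h : x ++ List.replicate M a = y ++ List.replicate N a)
    (hx : x.getLast? ≠ some a) : N ≤ M := by
  by_contra! hMN
  have hxy : x = y ++ List.replicate (N - M) a := by
    refine List.append_cancel_right (bs := List.replicate M a) ?_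
    rw [h, List.append_assoc, ← List.replicate_add, Nat.sub_add_cancel hMN.le]
  simp [hxy, List.getLast?_replicate, (Nat.sub_pos_of_lt hMN).ne'] at hx

theorem eq_and_le_of_append_replicate_suffix (hM : 0 < M) (hN : 0 < N)
    (hu : u.getLast? ≠ some a) (hv : v.getLast? ≠ some b)
    (h : u ++ List.replicate M a <:+ v ++ List.replicate N b) :
    a = b ∧ M ≤ N ∧ (u ≠ [] → M = N) := by
  obtain ⟨x, hx⟩ := h
  obtain rfl : a = b := by
    simpa [List.getLast?_replicate, hM.ne', hN.ne'] using congrArg List.getLast? hx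
  rw [← List.append_assoc] at hx
  refine ⟨rfl, le_of_append_replicate_eq hx.symm hv, fun hne => ?_⟩
  obtain ⟨u, z, rfl⟩ := (List.eq_nil_or_concat u).resolve_left hne
  refine le_antisymm (le_of_append_replicate_eq hx.symm hv) (le_of_append_replicate_eq hx ?_)
  simpa using hu

end TrailingRuns

theorem numRuns_replicate_append [DecidableEq α] {n : ℕ} (hn : 0 < n) (a : α) {v : List α}
    (hv : ∀ x ∈ v.head?, x ≠ a) : numRuns (List.replicate n a ++ v) = numRuns v + 1 := by
  obtain ⟨n, rfl⟩ := Nat.exists_eq_add_of_lt hn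
  rw [numRuns, Nat.zero_add, List.replicate_succ, List.cons_append, List.destutter_cons',
    List.destutter'_replicate_append (by simp)]
  cases v with
  | nil => rfl
  | cons x v =>
    rw [List.destutter'_cons_pos _ (hv x rfl).symm, numRuns, List.destutter_cons']
    rfl

section RunWord

variable (c : ℕ → α) (l : ℕ → ℕ) {k p j : ℕ}

theorem runWord_self (k : ℕ) : runWord c l k k = [] := by simp [runWord]

theorem runWord_succ (hkj : k ≤ j) :
    runWord c l k (j + 1) = runWord c l k j ++ List.replicate (l j) (c j) := by
  simp [runWord, Nat.sub_add_comm hkj, List.range_succ, Nat.add_sub_cancel' hkj]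

theorem runWord_append (hkp : k ≤ p) (hpj : p ≤ j) :
    runWord c l k p ++ runWord c l p j = runWord c l k j := by
  induction j, hpj using Nat.le_induction with
  | base => rw [runWord_self, List.append_nil]
  | succ j hpj ih =>
    rw [runWord_succ c l hpj, runWord_succ c l (hkp.trans hpj), ← ih, List.append_assoc]

theorem runWord_cons (hkj : k < j) :
    runWord c l k j = List.replicate (l k) (c k) ++ runWord c l (k + 1) j := by
  rw [← runWord_append c l k.le_succ hkj, runWord_succ c l le_rfl, runWord_self,
    List.nil_append]

theorem length_runWord_ge (hkj : k + 2 ≤ j) : l k + l (k + 1) ≤ (runWord c l k j).length := by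
  rw [runWord_cons c l (by omega), runWord_cons c l (by omega : k + 1 < j)]
  simp

theorem head?_runWord_append_replicate (hkp : k ≤ p) (hl : k < p → 0 < l k) (m : ℕ) :
    ∀ x ∈ (runWord c l k p ++ List.replicate m (c p)).head?, x = c k := by
  rcases hkp.eq_or_lt with rfl | hkp
  · simp [runWord_self, List.head?_replicate]
  · obtain ⟨n, hn⟩ := Nat.exists_eq_add_of_lt (hl hkp)
    simp [runWord_cons c l hkp, hn, List.replicate_succ]

theorem getLast?_runWord_ne (hkp : k ≤ p) (hl : ∀ t, k ≤ t → t < p → 0 < l t)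
    (hc : ∀ t, k ≤ t → t < p → c t ≠ c (t + 1)) : (runWord c l k p).getLast? ≠ some (c p) := by
  rcases hkp.eq_or_lt with rfl | hkp
  · simp [runWord_self]
  · obtain ⟨q, rfl⟩ := Nat.exists_eq_add_of_lt hkp
    have hq : 0 < l (k + q) := hl _ (by omega) (by omega)
    simpa [runWord_succ c l (by omega : k ≤ k + q), List.getLast?_replicate, hq.ne']
      using hc (k + q) (by omega) (by omega)

theorem exists_eq_runWord_append_replicate {b : List α} (hkj : k ≤ j)
    (hb : b <+: runWord c l k j) (hlen : b.length < (runWord c l k j).length) :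
    ∃ p m, k ≤ p ∧ p < j ∧ m < l p ∧ b = runWord c l k p ++ List.replicate m (c p) := by
  induction j, hkj using Nat.le_induction with
  | base => simp [runWord_self] at hlen
  | succ j hkj ih =>
    rw [runWord_succ c l hkj] at hb hlen
    by_cases h : b.length < (runWord c l k j).length
    · obtain ⟨p, m, hkp, hpj, hm, rfl⟩ :=
        ih (List.prefix_of_prefix_length_le hb (List.prefix_append _ _) h.le) h
      exact ⟨p, m, hkp, by omega, hm, rfl⟩
    · obtain ⟨b', rfl⟩ :=
        List.prefix_of_prefix_length_le (List.prefix_append _ _) hb (not_lt.1 h)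
      obtain ⟨-, hb'⟩ := List.prefix_replicate_iff.1 ((List.prefix_append_right_inj _).1 hb)
      exact ⟨j, b'.length, hkj, j.lt_succ_self, by simpa using hlen, by rw [← hb']⟩

theorem runWord_append_replicate_prefix (hkp : k ≤ p) (hpj : p < j) {m : ℕ} (hm : m ≤ l p) :
    runWord c l k p ++ List.replicate m (c p) <+: runWord c l k j := by
  rw [← runWord_append c l (hkp.trans p.le_succ) hpj, runWord_succ c l hkp, List.append_assoc]
  exact (List.prefix_append_right_inj _).2
    ((List.prefix_replicate_iff.2 (by simpa using hm)).trans (List.prefix_append _ _))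

variable [DecidableEq α]

theorem numRuns_runWord_append_replicate (hkp : k ≤ p) (hl : ∀ t, k ≤ t → t < p → 0 < l t)
    (hc : ∀ t, k ≤ t → t < p → c t ≠ c (t + 1)) (m : ℕ) :
    numRuns (runWord c l k p ++ List.replicate m (c p)) = p - k + if 0 < m then 1 else 0 := by
  obtain ⟨n, rfl⟩ := Nat.exists_eq_add_of_le hkp
  induction n generalizing k with
  | zero =>
    rcases Nat.eq_zero_or_pos m with rfl | hm
    · simp [runWord_self, numRuns]
    · simpa [runWord_self, hm, numRuns] using numRuns_replicate_append hm (c k) (v := []) (by simp)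
  | succ n ih =>
    rw [runWord_cons c l (by omega), List.append_assoc, show k + (n + 1) = k + 1 + n by omega,
      numRuns_replicate_append (hl k le_rfl (by omega)), ih (by omega)]
    · omega
    · exact fun t h1 h2 => hl t (by omega) (by omega)
    · exact fun t h1 h2 => hc t (by omega) (by omega)
    · intro x hx
      rw [head?_runWord_append_replicate c l (by omega) (fun _ => hl _ (by omega) (by omega))
        m x hx]
      exact (hc k le_rfl (by omega)).symm

end RunWord

section LongestBorder

variable {c : ℕ → α} {l : ℕ → ℕ} {k j : ℕ}

theorem last_run_le_of_longest_border {p M : ℕ} {b : List α} (hkj : k + 2 ≤ j)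
    (hl : ∀ t, k ≤ t → t < j → 0 < l t) (hc : ∀ t, k ≤ t → t + 1 < j → c t ≠ c (t + 1))
    (hb : IsBorder b (runWord c l k j))
    (hmax : ∀ b', IsBorder b' (runWord c l k j) → b'.length ≤ b.length)
    (hkp : k ≤ p) (hpj : p < j) (hM : 0 < M) (hMp : M ≤ l p)
    (hbeq : b = runWord c l k p ++ List.replicate M (c p)) :
    M ≤ l (j - 1) ∧ (M < l p → M = l (j - 1)) := by
  have hw : runWord c l k j = runWord c l k (j - 1) ++ List.replicate (l (j - 1)) (c (j - 1)) := by
    rw [← runWord_succ c l (by omega), Nat.sub_add_cancel (by omega)]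
  have hsuf := hb.2.1
  rw [hbeq, hw] at hsuf
  obtain ⟨hcp, hMle, hMeq⟩ := eq_and_le_of_append_replicate_suffix hM
    (hl _ (by omega) (by omega))
    (getLast?_runWord_ne c l hkp (fun t _ h => hl t (by omega) (by omega))
      (fun t h1 h2 => hc t h1 (by omega)))
    (getLast?_runWord_ne c l (by omega) (fun t _ h => hl t (by omega) (by omega))
      (fun t h1 h2 => hc t h1 (by omega))) hsuf
  refine ⟨hMle, fun hMlt => ?_⟩
  rcases hkp.eq_or_lt with rfl | hkp
  · -- otherwise `(c k)^(M+1)` is a border longer than `b = (c k)^M`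
    by_contra hne
    have hlonger : IsBorder (List.replicate (M + 1) (c k)) (runWord c l k j) := by
      refine ⟨?_, ?_, ?_⟩
      · simpa [runWord_self] using runWord_append_replicate_prefix c l le_rfl hpj hMlt
      · rw [hw, hcp]
        exact (List.suffix_replicate_iff.2 (by simp; omega)).trans (List.suffix_append _ _)
      · have := length_runWord_ge c l hkj
        have := hl (k + 1) (by omega) (by omega)
        simp only [List.length_replicate]
        omega
    have := hmax _ hlonger
    simp [hbeq, runWord_self] at this
  · refine hMeq ?_
    rw [runWord_cons c l hkp]
    simp [(hl k le_rfl (by omega)).ne']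

theorem runIndex_eq_of_longest_border [DecidableEq α] {p m ℓ : ℕ} (hkp : k ≤ p) (hpj : p < j)
    (hl : ∀ t, k ≤ t → t < j → 0 < l t) (hc : ∀ t, k ≤ t → t + 1 < j → c t ≠ c (t + 1))
    (hm : m < l p) (hb : IsBorder (runWord c l k p ++ List.replicate m (c p)) (runWord c l k j))
    (hmax : ∀ b', IsBorder b' (runWord c l k j) →
      b'.length ≤ (runWord c l k p ++ List.replicate m (c p)).length)
    (hℓ : ℓ = if 1 < j - k then numRuns (runWord c l k p ++ List.replicate m (c p)) else 0) :
    k + ℓ - (if 0 < ℓ ∧ l (j - 1) < l (k + ℓ - 1) then 1 else 0) = p := by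
  rcases (show j = k + 1 ∨ k + 2 ≤ j by omega) with rfl | hkj
  · rw [if_neg (by omega)] at hℓ
    subst hℓ
    simp only [lt_irrefl, false_and, if_false]
    omega
  rw [if_pos (by omega), numRuns_runWord_append_replicate c l hkp
    (fun t _ h => hl t (by omega) (by omega)) (fun t h1 h2 => hc t h1 (by omega))] at hℓ
  subst hℓ
  rcases Nat.eq_zero_or_pos m with rfl | hm0
  · simp only [lt_irrefl, if_false, add_zero]
    rcases hkp.eq_or_lt with rfl | hkp
    · simp
    -- `b` ends with the full run `c_{p-1}^{l_{p-1}}`, which is at most the last run of the word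
    obtain ⟨q, rfl⟩ := Nat.exists_eq_add_of_lt hkp
    have hq := (last_run_le_of_longest_border hkj hl hc hb hmax (p := k + q) (M := l (k + q))
      (by omega) (by omega) (hl _ (by omega) (by omega)) le_rfl
      (by simp [runWord_succ c l (by omega : k ≤ k + q)])).1
    rw [show k + q + 1 - k = q + 1 by omega, show k + (q + 1) - 1 = k + q by omega,
      if_neg (by omega)]
    omega
  · have hm' := (last_run_le_of_longest_border hkj hl hc hb hmax hkp hpj hm0 hm.le rfl).2 hm
    rw [if_pos hm0, if_pos ⟨by omega, by rw [show k + (p - k + 1) - 1 = p by omega]; omega⟩]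
    omega

end LongestBorder

/-- Under the run invariant, if `c_j > c_s` then
`c_k^{l_k} ⋯ c_{j-1}^{l_{j-1}} c_j^{l_j} ∈ L'` and its longest border is empty. -/
theorem rle_next_case2 [LinearOrder α] (c : ℕ → α) (l : ℕ → ℕ) (k j : ℕ) (hkj : k < j)
    (hlpos : ∀ t, k ≤ t → t ≤ j → 1 ≤ l t)
    (hcne : ∀ t, k ≤ t → t < j → c t ≠ c (t + 1))
    (hP' : InP' (runWord c l k j))
    (b : List α) (hb : IsBorder b (runWord c l k j))
    (hbmax : ∀ b' : List α, IsBorder b' (runWord c l k j) → b'.length ≤ b.length)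
    (ℓ i z s : ℕ)
    (hℓ : ℓ = if 1 < j - k then numRuns b else 0)
    (hi : i = k + ℓ)
    (hz : z = if 0 < ℓ ∧ l (j - 1) < l (i - 1) then 1 else 0)
    (hs : s = i - z)
    (hgt : c s < c j) :
    IsLR (runWord c l k (j + 1)) ∧
      ∀ b' : List α, IsBorder b' (runWord c l k (j + 1)) → b' = [] := by
  subst hs hz hi
  obtain ⟨p, m, hkp, hpj, hm, rfl⟩ :=
    exists_eq_runWord_append_replicate c l hkj.le hb.1 hb.2.2
  rw [runIndex_eq_of_longest_border hkp hpj (fun t h1 h2 => hlpos t h1 h2.le)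
    (fun t h1 h2 => hcne t h1 (by omega)) hm hb hbmax hℓ] at hgt
  have hnext : runWord c l k p ++ List.replicate m (c p) ++ [c p] <+: runWord c l k j := by
    simpa [List.replicate_succ'] using runWord_append_replicate_prefix c l hkp hpj hm
  have hInP : InP (runWord c l k j) := by
    refine hP'.resolve_right ?_
    rintro ⟨d, K, -, hd, hwd⟩
    have hcp : c p = d := List.eq_of_mem_replicate (hwd ▸ hnext.subset (by simp))
    exact (hd (c j)).not_gt (hcp ▸ hgt)
  have hL := hInP.isLyndon_append_replicate hb hbmax hnext hgt (hlpos j hkj.le le_rfl)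
  rw [runWord_succ c l hkj.le]
  exact ⟨Or.inl hL, fun b' hb' => hL.eq_nil_of_isBorder hb'⟩
end
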